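/- arXiv:1808.06361 — 3 statements merged into one kernel-verified Lean document; each statement's English description precedes it below -/
import Mathlib

section
/- Let m₁, …, m_k be positive integers with least common multiple m, and let G ⊆ Z_{≥0} be the numerical semigroup generated by m/m₁, …, m/m_k. Then the Frobenius number Fr(G) (the largest integer not in G) satisfies Fr(G) ≤ Σ_{i=2}^{k} (m/m_i)·(d_{i-1}/d_i) − Σ_{i=1}^{k} (m/m_i), where d_i = gcd(m/m₁, …, m/m_i). -/
set_option maxHeartbeats 1600000 in
/-- **Brauer's bound.** Let `m₁, …, m_k` be positive integers with
`lcm` equal to `M`, let `c i = M / m i`, and let `d i = gcd(c 0, …, c i)`. Then the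
Frobenius number of the numerical semigroup `G` generated by the `c i` satisfies
`Fr(G) ≤ Σ_{i=2}^k (M/mᵢ)·(d_{i-1}/dᵢ) − Σ_{i=1}^k (M/mᵢ)`, i.e. every natural
number strictly larger than this bound lies in `G`. -/
theorem stmt3 (k : ℕ) (hk : 0 < k) (m : Fin k → ℕ) (hm : ∀ i, 0 < m i)
    (M : ℕ) (hM : M = Finset.univ.lcm m)
    (c : Fin k → ℕ) (hc : ∀ i, c i = M / m i)
    (d : ℕ → ℕ) (hd : ∀ i : Fin k, d i.val = (Finset.Iic i).gcd c)
    (n : ℕ)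
    (hn : (∑ i ∈ Finset.univ.filter (fun i : Fin k => 0 < i.val),
            (c i : ℚ) * ((d (i.val - 1) : ℚ) / (d i.val : ℚ)))
          - (∑ i : Fin k, (c i : ℚ)) < (n : ℚ)) :
    n ∈ AddSubmonoid.closure (Set.range c) := by
  set C := AddSubmonoid.closure (Set.range c) with hC
  have hmdvdM : ∀ i, m i ∣ M := fun i => hM ▸ Finset.dvd_lcm (Finset.mem_univ i)
  have hMpos : 0 < M := by
    rcases Nat.eq_zero_or_pos M with h | h
    · exfalso
      rw [hM] at h
      obtain ⟨i, -, hi0⟩ := Finset.lcm_eq_zero_iff.mp h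
      exact (hm i).ne' hi0
    · exact h
  have hcpos : ∀ i, 0 < c i := by
    intro i
    rw [hc]
    exact Nat.div_pos (Nat.le_of_dvd hMpos (hmdvdM i)) (hm i)
  have hcdvdM : ∀ i, c i ∣ M := by
    intro i
    rw [hc]
    exact Nat.div_dvd_of_dvd (hmdvdM i)
  -- positivity of d
  have hdpos : ∀ j : Fin k, 0 < d j.val := by
    intro j
    rw [hd j]
    rcases Nat.eq_zero_or_pos ((Finset.Iic j).gcd c) with h | h
    · exfalso
      have : c j = 0 := Nat.eq_zero_of_zero_dvd (h ▸ Finset.gcd_dvd (Finset.mem_Iic.mpr le_rfl))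
      exact (hcpos j).ne' this
    · exact h
  -- gcd of all the c i is 1
  have hgcd1 : Finset.univ.gcd c = 1 := by
    set g := Finset.univ.gcd c with hg
    have hgdvd : ∀ i, g ∣ c i := fun i => Finset.gcd_dvd (Finset.mem_univ i)
    have hgM : g ∣ M := (hgdvd ⟨0, hk⟩).trans (hcdvdM ⟨0, hk⟩)
    have hmig : ∀ i, m i ∣ M / g := by
      intro i
      rw [Nat.dvd_div_iff_mul_dvd hgM, mul_comm]
      have h1 : m i * g ∣ m i * (M / m i) := mul_dvd_mul_left (m i) (hc i ▸ hgdvd i)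
      rwa [Nat.mul_div_cancel' (hmdvdM i)] at h1
    have hMdvd : M ∣ M / g := by
      have h : Finset.univ.lcm m ∣ M / g := Finset.lcm_dvd (fun i _ => hmig i)
      rwa [← hM] at h
    have hMg : M / g = M := Nat.dvd_antisymm (Nat.div_dvd_of_dvd hgM) hMdvd
    have hMgM : M * g = M * 1 := by
      conv_lhs => rw [← hMg]
      rw [Nat.div_mul_cancel hgM, mul_one]
    exact Nat.eq_of_mul_eq_mul_left hMpos hMgM
  -- the chain: for p+1 < k, d (p+1) = gcd (c (p+1)) (d p)
  have hrec : ∀ p : ℕ, ∀ hp1 : p + 1 < k,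
      d (p + 1) = Nat.gcd (c ⟨p + 1, hp1⟩) (d p) := by
    intro p hp1
    have hp : p < k := Nat.lt_of_succ_lt hp1
    have hins : Finset.Iic (⟨p + 1, hp1⟩ : Fin k) =
        insert (⟨p + 1, hp1⟩ : Fin k) (Finset.Iic (⟨p, hp⟩ : Fin k)) := by
      ext x
      simp only [Finset.mem_Iic, Finset.mem_insert, Fin.le_def, Fin.ext_iff]
      omega
    have h1 := hd (⟨p + 1, hp1⟩ : Fin k)
    simp only at h1
    rw [h1, hins, Finset.gcd_insert, ← hd (⟨p, hp⟩ : Fin k)]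
    rfl
  have hchain : ∀ p : ℕ, p + 1 < k → d (p + 1) ∣ d p := by
    intro p hp1
    rw [hrec p hp1]
    exact Nat.gcd_dvd_right _ _
  -- sums
  set S : Fin k → ℕ := fun j =>
    ∑ i ∈ (Finset.Iic j).filter (fun i => 0 < i.val), c i * (d (i.val - 1) / d i.val) with hS
  set T : Fin k → ℕ := fun j => ∑ i ∈ Finset.Iic j, c i with hT
  -- the key induction
  have key : ∀ p : ℕ, ∀ hp : p < k, ∀ n : ℤ, ((d p : ℤ) ∣ n) →
      ((S ⟨p, hp⟩ : ℤ) - (T ⟨p, hp⟩ : ℤ) < n) → 0 ≤ n ∧ n.toNat ∈ C := by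
    intro p
    induction p with
    | zero =>
      intro hp n hdvd hlt
      have hIic0 : Finset.Iic (⟨0, hp⟩ : Fin k) = {(⟨0, hp⟩ : Fin k)} := by
        ext x
        simp only [Finset.mem_Iic, Finset.mem_singleton, Fin.le_def, Fin.ext_iff]
        omega
      have hd0 : d 0 = c ⟨0, hp⟩ := by
        have h1 := hd (⟨0, hp⟩ : Fin k)
        simp only at h1
        rw [h1, hIic0, Finset.gcd_singleton]
        simp
      have hS0 : S ⟨0, hp⟩ = 0 := by
        simp only [hS, hIic0]
        simp
      have hT0 : T ⟨0, hp⟩ = c ⟨0, hp⟩ := by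
        simp only [hT, hIic0, Finset.sum_singleton]
      rw [hS0, hT0] at hlt
      rw [hd0] at hdvd
      obtain ⟨q, hq⟩ := hdvd
      have hc0 : (0 : ℤ) < (c ⟨0, hp⟩ : ℤ) := by exact_mod_cast hcpos ⟨0, hp⟩
      have hq0 : 0 ≤ q := by nlinarith [hq, hlt]
      have hqn : ((q.toNat * c ⟨0, hp⟩ : ℕ) : ℤ) = n := by
        push_cast [Int.toNat_of_nonneg hq0]
        rw [hq]; ring
      constructor
      · omega
      · have hmem : c ⟨0, hp⟩ ∈ C := AddSubmonoid.subset_closure ⟨⟨0, hp⟩, rfl⟩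
        have h2 : q.toNat • c ⟨0, hp⟩ ∈ C := AddSubmonoid.nsmul_mem C hmem q.toNat
        have h3 : n.toNat = q.toNat * c ⟨0, hp⟩ := by omega
        rw [h3]
        simpa [smul_eq_mul] using h2
    | succ p ih =>
      intro hp1 n hdvd hlt
      have hp : p < k := Nat.lt_of_succ_lt hp1
      have hgrec := hrec p hp1
      have hgD : d (p + 1) ∣ d p := hchain p hp1
      have hga : d (p + 1) ∣ c ⟨p + 1, hp1⟩ := hgrec ▸ Nat.gcd_dvd_left _ _
      have hDpos : 0 < d p := hdpos ⟨p, hp⟩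
      have hgpos : 0 < d (p + 1) := hdpos ⟨p + 1, hp1⟩
      have heD : (d p / d (p + 1)) * d (p + 1) = d p := Nat.div_mul_cancel hgD
      have hepos : 0 < d p / d (p + 1) := Nat.div_pos (Nat.le_of_dvd hDpos hgD) hgpos
      -- structure of the sums
      have hins : Finset.Iic (⟨p + 1, hp1⟩ : Fin k) =
          insert (⟨p + 1, hp1⟩ : Fin k) (Finset.Iic (⟨p, hp⟩ : Fin k)) := by
        ext x
        simp only [Finset.mem_Iic, Finset.mem_insert, Fin.le_def, Fin.ext_iff]
        omega
      have hJnot : (⟨p + 1, hp1⟩ : Fin k) ∉ Finset.Iic (⟨p, hp⟩ : Fin k) := by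
        simp only [Finset.mem_Iic, Fin.le_def]
        omega
      have hSstep : S ⟨p + 1, hp1⟩ =
          c ⟨p + 1, hp1⟩ * (d p / d (p + 1)) + S ⟨p, hp⟩ := by
        simp only [hS, hins, Finset.filter_insert]
        rw [if_pos (Nat.succ_pos p)]
        rw [Finset.sum_insert (by simp [Finset.mem_filter, hJnot])]
        simp
      have hTstep : T ⟨p + 1, hp1⟩ = c ⟨p + 1, hp1⟩ + T ⟨p, hp⟩ := by
        simp only [hT, hins]
        rw [Finset.sum_insert hJnot]
      -- Bezout
      obtain ⟨q, hq⟩ := hdvd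
      have hbez : (d (p + 1) : ℤ) = (c ⟨p + 1, hp1⟩ : ℤ) * Int.gcdA (c ⟨p + 1, hp1⟩) (d p)
          + (d p : ℤ) * Int.gcdB (c ⟨p + 1, hp1⟩) (d p) := by
        have h1 := Int.gcd_eq_gcd_ab (c ⟨p + 1, hp1⟩ : ℤ) (d p : ℤ)
        rw [hgrec]
        simpa using h1
      set x := Int.gcdA (c ⟨p + 1, hp1⟩) (d p) with hx
      set y := Int.gcdB (c ⟨p + 1, hp1⟩) (d p) with hy
      set e := d p / d (p + 1) with he
      obtain ⟨t, htval⟩ : ∃ t : ℕ, (t : ℤ) = (q * x) % (e : ℤ) :=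
        ⟨((q * x) % (e : ℤ)).toNat,
          Int.toNat_of_nonneg (Int.emod_nonneg _ (by exact_mod_cast hepos.ne'))⟩
      have htlt : t < e := by
        have h1 := Int.emod_lt_of_pos (q * x) (by exact_mod_cast hepos : (0:ℤ) < (e:ℤ))
        omega
      -- divisibility of n - t * c by d p
      have hediv : (e : ℤ) ∣ q * x - t := by
        rw [htval]
        exact Int.dvd_self_sub_of_emod_eq rfl
      have hDdvd : (d p : ℤ) ∣ n - (t : ℤ) * (c ⟨p + 1, hp1⟩ : ℤ) := by
        obtain ⟨s, hs⟩ := hediv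
        obtain ⟨a', ha'⟩ := hga
        have hn' : n - (t : ℤ) * (c ⟨p + 1, hp1⟩ : ℤ) =
            (c ⟨p + 1, hp1⟩ : ℤ) * (q * x - t) + (d p : ℤ) * (y * q) := by
          rw [hq, hbez]; ring
        rw [hn', hs]
        have h1 : (c ⟨p + 1, hp1⟩ : ℤ) * ((e : ℤ) * s) = (d p : ℤ) * ((a' : ℤ) * s) := by
          have hea : (e : ℤ) * (d (p + 1) : ℤ) = (d p : ℤ) := by exact_mod_cast heD
          have haa : (c ⟨p + 1, hp1⟩ : ℤ) = (d (p + 1) : ℤ) * (a' : ℤ) := by exact_mod_cast ha'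
          rw [← hea, haa]; ring
        rw [h1]
        exact dvd_add (Dvd.intro _ rfl) (Dvd.intro _ rfl)
      -- the inequality
      have hca : (0 : ℤ) ≤ (c ⟨p + 1, hp1⟩ : ℤ) := by positivity
      have hta : (t : ℤ) * (c ⟨p + 1, hp1⟩ : ℤ) ≤ ((e : ℤ) - 1) * (c ⟨p + 1, hp1⟩ : ℤ) := by
        have h1 : (t : ℤ) ≤ (e : ℤ) - 1 := by omega
        exact mul_le_mul_of_nonneg_right h1 hca
      have hlt' : (S ⟨p, hp⟩ : ℤ) - (T ⟨p, hp⟩ : ℤ) < n - (t : ℤ) * (c ⟨p + 1, hp1⟩ : ℤ) := by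
        have hcast : (S ⟨p + 1, hp1⟩ : ℤ)
            = (c ⟨p + 1, hp1⟩ : ℤ) * (e : ℤ) + (S ⟨p, hp⟩ : ℤ) := by exact_mod_cast hSstep
        have hcast2 : (T ⟨p + 1, hp1⟩ : ℤ)
            = (c ⟨p + 1, hp1⟩ : ℤ) + (T ⟨p, hp⟩ : ℤ) := by exact_mod_cast hTstep
        rw [hcast, hcast2] at hlt
        nlinarith [hta, hlt]
      -- rewrite using a natural-number product
      have hwcast : ((t * c ⟨p + 1, hp1⟩ : ℕ) : ℤ) = (t : ℤ) * (c ⟨p + 1, hp1⟩ : ℤ) := by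
        push_cast; ring
      rw [← hwcast] at hDdvd hlt'
      obtain ⟨h0, hmem⟩ := ih hp _ hDdvd hlt'
      constructor
      · omega
      · have hamem : c ⟨p + 1, hp1⟩ ∈ C := AddSubmonoid.subset_closure ⟨⟨p + 1, hp1⟩, rfl⟩
        have h2 : t * c ⟨p + 1, hp1⟩ ∈ C := by
          have := AddSubmonoid.nsmul_mem C hamem t
          simpa [smul_eq_mul] using this
        have h3 := AddSubmonoid.add_mem C hmem h2
        have h4 : n.toNat = (n - ((t * c ⟨p + 1, hp1⟩ : ℕ) : ℤ)).toNat + t * c ⟨p + 1, hp1⟩ := by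
          omega
        rw [h4]
        exact h3
  -- conclude
  have hkm1 : k - 1 < k := Nat.sub_lt hk Nat.one_pos
  have hIicTop : Finset.Iic (⟨k - 1, hkm1⟩ : Fin k) = Finset.univ := by
    ext x
    simp only [Finset.mem_Iic, Finset.mem_univ, iff_true, Fin.le_def]
    omega
  have hd1 : d (k - 1) = 1 := by
    have h1 := hd (⟨k - 1, hkm1⟩ : Fin k)
    simp only at h1
    rw [h1, hIicTop, hgcd1]
  have hScast : ((S ⟨k - 1, hkm1⟩ : ℕ) : ℚ) =
      ∑ i ∈ Finset.univ.filter (fun i : Fin k => 0 < i.val),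
        (c i : ℚ) * ((d (i.val - 1) : ℚ) / (d i.val : ℚ)) := by
    simp only [hS, hIicTop]
    rw [Nat.cast_sum]
    apply Finset.sum_congr rfl
    intro i hi
    have hi0 : 0 < i.val := by
      have := (Finset.mem_filter.mp hi).2
      simpa using this
    have hdvd : d i.val ∣ d (i.val - 1) := by
      have h1 := hchain (i.val - 1) (by omega)
      have heq : i.val - 1 + 1 = i.val := by omega
      rwa [heq] at h1
    rw [Nat.cast_mul, Nat.cast_div_charZero hdvd]
  have hTcast : ((T ⟨k - 1, hkm1⟩ : ℕ) : ℚ) = ∑ i : Fin k, (c i : ℚ) := by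
    simp only [hT, hIicTop]
    rw [Nat.cast_sum]
  have hnZ : (S ⟨k - 1, hkm1⟩ : ℤ) - (T ⟨k - 1, hkm1⟩ : ℤ) < (n : ℤ) := by
    have h1 : ((S ⟨k - 1, hkm1⟩ : ℕ) : ℚ) - ((T ⟨k - 1, hkm1⟩ : ℕ) : ℚ) < (n : ℚ) := by
      rw [hScast, hTcast]; exact hn
    exact_mod_cast h1
  have hfin := key (k - 1) hkm1 (n : ℤ) (by rw [hd1]; exact one_dvd _) hnZ
  have h2 := hfin.2
  rwa [Int.toNat_natCast] at h2
end

section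
/- Let X be a smooth projective surface, B an effective R-divisor with (X,B) log canonical (in particular every coefficient of B is ≤ 1), and suppose −(K_X+B) is nef. If H ⊂ X is an irreducible curve with H² ≤ 0 and b = mult_H B, then (K_X+H)·H = 0 (so p_a(H) = 1), (1−b)·H² = 0, and (B − bH)·H = 0. -/
/-! Writing `−(K+B) = −(K+H) + (1−b)H − (B−bH)` and intersecting with `H` expresses the nef
number `−(K+B)·H ≥ 0` as a sum of three numbers that are each `≤ 0`; so all three vanish. -/

theorem LinearMap.neg_add_apply_eq {R M : Type*} [CommRing R] [AddCommGroup M] [Module R M]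
    (f : M →ₗ[R] M →ₗ[R] R) (K B H : M) (b : R) :
    f (-(K + B)) H = -f (K + H) H + (1 - b) * f H H - f (B - b • H) H := by
  simp only [map_add, map_sub, map_neg, map_smul, LinearMap.add_apply, LinearMap.sub_apply,
    LinearMap.neg_apply, LinearMap.smul_apply, smul_eq_mul]
  ring

theorem stmt8_general (V : Type*) [AddCommGroup V] [Module ℝ V]
    (inter : V →ₗ[ℝ] V →ₗ[ℝ] ℝ)
    (K B H : V) (b : ℝ)
    (hb : b ≤ 1)
    (hH2 : inter H H ≤ 0)
    (hnef : 0 ≤ inter (-(K + B)) H)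
    (heff : 0 ≤ inter (B - b • H) H)
    (hpa : 0 ≤ inter (K + H) H) :
    inter (K + H) H = 0 ∧ (1 - b) * inter H H = 0 ∧ inter (B - b • H) H = 0 := by
  have hH2b : (1 - b) * inter H H ≤ 0 := mul_nonpos_of_nonneg_of_nonpos (by linarith) hH2
  rw [inter.neg_add_apply_eq K B H b] at hnef
  exact ⟨by linarith, by linarith, by linarith⟩

/-- Let `X` be a smooth projective surface, `B` an effective
`ℝ`-divisor with `(X, B)` log canonical (so `b = mult_H B ≤ 1`), and `−(K_X+B)` nef.
If `H` is an irreducible curve with `H² ≤ 0` (and `p_a(H) ≥ 1`, i.e. `(K_X+H)·H ≥ 0`;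
the effective divisor `B − bH` has no `H`-component, so `(B − bH)·H ≥ 0`), then
`(K_X+H)·H = 0` (so `p_a(H) = 1`), `(1−b)·H² = 0` and `(B − bH)·H = 0`. -/
theorem stmt8 (V : Type*) [AddCommGroup V] [Module ℝ V]
    (inter : V →ₗ[ℝ] V →ₗ[ℝ] ℝ)
    (inter_symm : ∀ x y : V, inter x y = inter y x)
    (K B H : V) (b : ℝ)
    (hb : b ≤ 1)
    (hH2 : inter H H ≤ 0)
    (hnef : 0 ≤ inter (-(K + B)) H)
    (heff : 0 ≤ inter (B - b • H) H)
    (hpa : 0 ≤ inter (K + H) H) :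
    inter (K + H) H = 0 ∧ (1 - b) * inter H H = 0 ∧ inter (B - b • H) H = 0 :=
  stmt8_general V inter K B H b hb hH2 hnef heff hpa
end

section
/- Let f: X → C be an elliptic quasi-bundle from a smooth projective surface over a curve of genus g(C) ≥ 1, with multiple fibers m₁F₁, …, m_kF_k, set m = lcm(m_i), and suppose M is a nef Cartier divisor with M ≡ (a/(dm))F for the general fiber F, some integer a ≥ 0 and d ∈ {1,2,3}. Then the quantity d·m·(2g(C) − 2 + Σᵢ(1 − 1/m_i)) + a strictly exceeds Brauer's bound Σ_{i=2}^k (m/m_i)(d_{i-1}/d_i) − Σ_{i=1}^k (m/m_i) for the Frobenius number, where d_i = gcd(m/m₁,…,m/m_i); i.e., dK(G) + a > Fr(G), where K(G) = m(2g(C) − 2 + Σᵢ(1−1/m_i)). -/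
/-- Let `f : X → C` be an elliptic quasi-bundle over a curve of
genus `g ≥ 1` with multiple fibers `m₁F₁, …, m_kF_k`, `M = lcm(mᵢ)`, and let `M` be a
nef Cartier divisor with `M ≡ (a/(dM))F` for some integer `a ≥ 0` and `d ∈ {1,2,3}`.
Then `d·K(G) + a` strictly exceeds Brauer's bound for the Frobenius number of the
numerical semigroup `G` generated by the `M/mᵢ`:
`Σ_{i=2}^k (M/mᵢ)(d_{i-1}/dᵢ) − Σ_{i=1}^k (M/mᵢ) < d·M·(2g − 2 + Σᵢ(1 − 1/mᵢ)) + a`,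
where `dᵢ = gcd(M/m₁, …, M/mᵢ)` and `K(G) = M(2g − 2 + Σᵢ(1 − 1/mᵢ))`. -/
theorem stmt18 (k : ℕ) (hk : 0 < k) (m : Fin k → ℕ) (hm : ∀ i, 0 < m i)
    (M : ℕ) (hM : M = Finset.univ.lcm m)
    (c : Fin k → ℕ) (hc : ∀ i, c i = M / m i)
    (d : ℕ → ℕ) (hd : ∀ i : Fin k, d i.val = (Finset.Iic i).gcd c)
    (g : ℕ) (hg : 1 ≤ g)
    (dd : ℕ) (hdd : dd = 1 ∨ dd = 2 ∨ dd = 3)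
    (a : ℕ) :
    (∑ i ∈ Finset.univ.filter (fun i : Fin k => 0 < i.val),
        ((M : ℚ) / (m i : ℚ)) * ((d (i.val - 1) : ℚ) / (d i.val : ℚ)))
      - (∑ i : Fin k, (M : ℚ) / (m i : ℚ))
    < (dd : ℚ) * (M : ℚ) * (2 * (g : ℚ) - 2 + ∑ i : Fin k, (1 - 1 / (m i : ℚ)))
      + (a : ℚ) := by
  have hMd : ∀ i, m i ∣ M := fun i => hM ▸ Finset.dvd_lcm (Finset.mem_univ i)
  have hMpos : 0 < M := by
    rw [hM]
    rcases Nat.eq_zero_or_pos (Finset.univ.lcm m) with h | h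
    · rw [Finset.lcm_eq_zero_iff] at h
      obtain ⟨i, _, hi⟩ := h
      exact absurd hi.symm (hm i).ne
    · exact h
  have hcd : ∀ i, c i ∣ M := by
    intro i
    rw [hc]
    exact ⟨m i, (Nat.div_mul_cancel (hMd i)).symm⟩
  have hcpos : ∀ i, 0 < c i := by
    intro i
    rw [hc]
    exact Nat.div_pos (Nat.le_of_dvd hMpos (hMd i)) (hm i)
  have hcast : ∀ i, (M : ℚ) / (m i : ℚ) = (c i : ℚ) := by
    intro i
    rw [hc, Nat.cast_div (hMd i) (by exact_mod_cast (hm i).ne')]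
  have hT : ∀ i ∈ Finset.univ.filter (fun i : Fin k => 0 < i.val),
      ((M : ℚ) / (m i : ℚ)) * ((d (i.val - 1) : ℚ) / (d i.val : ℚ)) ≤ (M : ℚ) := by
    intro i hi
    simp only [Finset.mem_filter] at hi
    have hi0 : 0 < i.val := hi.2
    set j := i.val - 1 with hj
    have hjk : j < k := lt_of_le_of_lt (Nat.pred_le _) i.isLt
    set jf : Fin k := ⟨j, hjk⟩ with hjf
    have hIic : Finset.Iic i = insert i (Finset.Iic jf) := by
      ext b
      simp only [Finset.mem_Iic, Finset.mem_insert, Fin.le_def, Fin.ext_iff]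
      have hjv : ((⟨j, hjk⟩ : Fin k) : ℕ) = i.val - 1 := rfl
      omega
    have hdi : d i.val = Nat.gcd (c i) (d j) := by
      rw [hd i, hIic, Finset.gcd_insert]
      have h2 := hd jf
      simp only [hjf] at h2
      rw [h2]
      rfl
    have hdiv_ci : d i.val ∣ c i := hdi ▸ Nat.gcd_dvd_left _ _
    have hdipos : 0 < d i.val := Nat.pos_of_dvd_of_pos hdiv_ci (hcpos i)
    have hdjM : d j ∣ M := by
      have h1 : d j ∣ c jf := by
        have h2 := hd jf
        simp only [hjf] at h2
        rw [h2]
        exact Finset.gcd_dvd (Finset.mem_Iic.mpr le_rfl)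
      exact h1.trans (hcd jf)
    have hL : Nat.lcm (c i) (d j) ∣ M := Nat.lcm_dvd (hcd i) hdjM
    have hkey : (c i : ℚ) * ((d j : ℚ) / (d i.val : ℚ)) = (Nat.lcm (c i) (d j) : ℚ) := by
      have hn : c i * d j = d i.val * Nat.lcm (c i) (d j) := by
        rw [hdi]; exact (Nat.gcd_mul_lcm _ _).symm
      have hq : (c i : ℚ) * (d j : ℚ) = (d i.val : ℚ) * (Nat.lcm (c i) (d j) : ℚ) := by
        exact_mod_cast congrArg (Nat.cast : ℕ → ℚ) hn
      have hd0 : (d i.val : ℚ) ≠ 0 := by exact_mod_cast hdipos.ne'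
      rw [mul_div_assoc'] at *
      rw [div_eq_iff hd0]
      linear_combination hq
    calc ((M : ℚ) / (m i : ℚ)) * ((d (i.val - 1) : ℚ) / (d i.val : ℚ))
        = (Nat.lcm (c i) (d j) : ℚ) := by rw [hcast i, ← hj]; exact hkey
      _ ≤ (M : ℚ) := by exact_mod_cast Nat.le_of_dvd hMpos hL
  have h1 : (∑ i ∈ Finset.univ.filter (fun i : Fin k => 0 < i.val),
      ((M : ℚ) / (m i : ℚ)) * ((d (i.val - 1) : ℚ) / (d i.val : ℚ)))
      ≤ ∑ _i ∈ Finset.univ.filter (fun i : Fin k => 0 < i.val), (M : ℚ) :=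
    Finset.sum_le_sum hT
  have h2 : (∑ _i ∈ Finset.univ.filter (fun i : Fin k => 0 < i.val), (M : ℚ))
      < ∑ _i : Fin k, (M : ℚ) := by
    apply Finset.sum_lt_sum_of_subset (Finset.filter_subset _ _)
      (Finset.mem_univ (⟨0, hk⟩ : Fin k)) (by simp) (by exact_mod_cast hMpos)
    intro j _ _
    positivity
  have hSeq : (∑ _i : Fin k, (M : ℚ)) - (∑ i : Fin k, (M : ℚ) / (m i : ℚ))
      = (M : ℚ) * ∑ i : Fin k, (1 - 1 / (m i : ℚ)) := by
    rw [Finset.mul_sum, ← Finset.sum_sub_distrib]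
    apply Finset.sum_congr rfl
    intro i _
    have hne : (m i : ℚ) ≠ 0 := by exact_mod_cast (hm i).ne'
    field_simp
  have hA : 0 ≤ ∑ i : Fin k, (1 - 1 / (m i : ℚ)) := by
    apply Finset.sum_nonneg
    intro i _
    have h1m : (1 : ℚ) ≤ (m i : ℚ) := by exact_mod_cast hm i
    have : 1 / (m i : ℚ) ≤ 1 := by
      rw [div_le_one (by linarith)]; linarith
    linarith
  have hdd1 : (1 : ℚ) ≤ (dd : ℚ) := by rcases hdd with h | h | h <;> norm_num [h]
  have hg1 : (1 : ℚ) ≤ (g : ℚ) := by exact_mod_cast hg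
  have ha0 : (0 : ℚ) ≤ (a : ℚ) := Nat.cast_nonneg a
  have hM0 : (0 : ℚ) ≤ (M : ℚ) := Nat.cast_nonneg M
  have h3 : (∑ _i : Fin k, (M : ℚ)) - (∑ i : Fin k, (M : ℚ) / (m i : ℚ))
      ≤ (dd : ℚ) * (M : ℚ) * (2 * (g : ℚ) - 2 + ∑ i : Fin k, (1 - 1 / (m i : ℚ)))
        + (a : ℚ) := by
    rw [hSeq]
    nlinarith [mul_nonneg hM0 hA,
      mul_nonneg (mul_nonneg (by linarith : (0:ℚ) ≤ (dd:ℚ)) hM0) (by linarith : (0:ℚ) ≤ 2*(g:ℚ) - 2),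
      mul_nonneg (mul_nonneg (by linarith : (0:ℚ) ≤ (dd:ℚ) - 1) hM0) hA]
  linarith
end
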